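/- The Hilbert series of the rank-≤2 symmetric determinantal variety in 4×4 symmetric matrices satisfies ∑_{λ} dim L(λ) q^{|λ|} = (1 + 3q + 6q²)/(1−q)⁷, where λ ranges over the lattice cone generated by 2ω₁ and 2ω₂ in the dominant weights of 𝔰𝔩₄, and if λ = 2aω₁ + 2bω₂ then |λ| = a + 2b. -/

import Mathlib

open PowerSeries

/-- `dim L(2aω₁+2bω₂)` for `𝔰𝔩₄`, written as the product over the six positive roots
`εᵢ−εⱼ` (1 ≤ i < j ≤ 4) of `(λ+ρ, α)/(ρ, α)` with `λ = 2aω₁+2bω₂`. -/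
noncomputable def weylDimSL4 (a b : ℕ) : ℚ :=
  ((2 * a + 1) / 1) * ((2 * b + 1) / 1) * ((0 + 1) / 1) *
    ((2 * a + 2 * b + 2) / 2) * ((2 * b + 2) / 2) * ((2 * a + 2 * b + 3) / 3)

noncomputable def Gfun (n m : ℚ) : ℚ :=
  (18 - 33*m - 49*m^2 + 66*m^3 + 56*m^4 - 24*m^5 - 16*m^6
   + 66*n - 5*n*m - 195*n*m^2 - 64*n*m^3 + 108*n*m^4 + 48*n*m^5
   + 72*n^2 + 108*n^2*m - 60*n^2*m^2 - 144*n^2*m^3 - 48*n^2*m^4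
   + 24*n^3 + 68*n^3*m + 60*n^3*m^2 + 16*n^3*m^3) / 18

lemma sum_d (n m : ℕ) (h : 2 * m ≤ n) :
    ∑ b ∈ Finset.range (m + 1), weylDimSL4 (n - 2 * b) b = Gfun n m := by
  induction m with
  | zero =>
      rw [Finset.sum_range_one]
      simp only [weylDimSL4, Gfun, Nat.mul_zero, Nat.sub_zero]
      push_cast
      ring
  | succ m ih =>
      have h1 : 2 * m ≤ n := by omega
      rw [Finset.sum_range_succ, ih h1]
      have h2 : (((n - 2 * (m + 1)) : ℕ) : ℚ) = (n : ℚ) - 2 * ((m : ℚ) + 1) := by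
        push_cast [Nat.cast_sub h]
        ring
      simp only [weylDimSL4, Gfun, h2]
      push_cast
      ring

lemma coeff_pow7 (k : ℕ) :
    PowerSeries.coeff (R := ℚ) k ((1 - X) ^ 7) = (-1) ^ k * (Nat.choose 7 k) := by
  have hexp : ((1 : ℚ⟦X⟧) - X) ^ 7
      = ∑ i ∈ Finset.range 8, PowerSeries.C ((-1) ^ i * (Nat.choose 7 i : ℚ)) * X ^ i := by
    rw [sub_eq_add_neg, add_comm, add_pow]
    apply Finset.sum_congr rfl
    intro i _
    rw [neg_pow]
    simp [map_mul, map_pow, map_natCast]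
    ring
  rw [hexp, map_sum]
  by_cases hk : k < 8
  · rw [Finset.sum_eq_single k]
    · rw [coeff_C_mul, coeff_X_pow, if_pos rfl, mul_one]
    · intro i _ hik
      simp only [coeff_C_mul, coeff_X_pow]
      rw [if_neg (fun h => hik h.symm), mul_zero]
    · intro hkk
      exact absurd (Finset.mem_range.mpr hk) hkk
  · rw [Finset.sum_eq_zero, Nat.choose_eq_zero_of_lt (by omega), Nat.cast_zero, mul_zero]
    intro i hi
    simp only [coeff_C_mul, coeff_X_pow]
    rw [if_neg (by simp at hi; omega), mul_zero]

set_option maxHeartbeats 1000000 in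
/-- Hilbert series of the rank-≤2 symmetric determinantal variety in `4×4` symmetric
matrices: `∑_{a,b∈ℕ} dim L(2aω₁+2bω₂) q^{a+2b} = (1 + 3q + 6q²)/(1−q)⁷`, i.e.
`(1−q)⁷ · ∑_{a,b} d(a,b) q^{a+2b} = 1 + 3q + 6q²` in `ℚ⟦q⟧`. -/
theorem symmetric_determinantal_rank2_hilbert_series (S : PowerSeries ℚ)
    (hS : ∀ n : ℕ, PowerSeries.coeff n S =
      ∑ b ∈ Finset.range (n / 2 + 1), weylDimSL4 (n - 2 * b) b) :
    (1 - X) ^ 7 * S = 1 + 3 * X + 6 * X ^ 2 := by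
  have ceS : ∀ u : ℕ, PowerSeries.coeff (R := ℚ) (2 * u) S = Gfun (2 * u) u := by
    intro u
    rw [hS]
    have h2 : 2 * u / 2 = u := by omega
    rw [h2, sum_d _ _ (le_refl _)]
    norm_cast
  have coS : ∀ u : ℕ, PowerSeries.coeff (R := ℚ) (2 * u + 1) S = Gfun (2 * u + 1) u := by
    intro u
    rw [hS]
    have h2 : (2 * u + 1) / 2 = u := by omega
    rw [h2, sum_d _ _ (by omega)]
    norm_cast
  have hrhs : ∀ n : ℕ, PowerSeries.coeff (R := ℚ) n (1 + 3 * X + 6 * X ^ 2)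
      = if n = 0 then 1 else if n = 1 then 3 else if n = 2 then 6 else 0 := by
    intro n
    have h3 : (3 : ℚ⟦X⟧) = PowerSeries.C 3 := (map_ofNat _ 3).symm
    have h6 : (6 : ℚ⟦X⟧) = PowerSeries.C 6 := (map_ofNat _ 6).symm
    rw [map_add, map_add, h3, h6, coeff_C_mul, coeff_C_mul, coeff_one,
      PowerSeries.coeff_X, coeff_X_pow]
    rcases n with _ | _ | _ | n <;> norm_num
  have c0 : Nat.choose 7 0 = 1 := by decide
  have c1 : Nat.choose 7 1 = 7 := by decide
  have c2 : Nat.choose 7 2 = 21 := by decide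
  have c3 : Nat.choose 7 3 = 35 := by decide
  have c4 : Nat.choose 7 4 = 35 := by decide
  have c5 : Nat.choose 7 5 = 21 := by decide
  have c6 : Nat.choose 7 6 = 7 := by decide
  have c7 : Nat.choose 7 7 = 1 := by decide
  ext n
  rw [PowerSeries.coeff_mul, Finset.Nat.sum_antidiagonal_eq_sum_range_succ_mk, hrhs]
  by_cases hn : n < 7
  · interval_cases n <;>
    · simp only [Finset.sum_range_succ, Finset.sum_range_zero, coeff_pow7, hS, weylDimSL4]
      norm_num [Nat.choose]
  · have htrunc : ∑ k ∈ Finset.range (n + 1),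
        PowerSeries.coeff (R := ℚ) k ((1 - X) ^ 7) * PowerSeries.coeff (R := ℚ) (n - k) S
        = ∑ k ∈ Finset.range 8,
        PowerSeries.coeff (R := ℚ) k ((1 - X) ^ 7) * PowerSeries.coeff (R := ℚ) (n - k) S := by
      symm
      apply Finset.sum_subset
      · intro x hx
        simp only [Finset.mem_range] at hx ⊢
        omega
      · intro x _ h8
        simp only [Finset.mem_range] at h8
        rw [coeff_pow7, Nat.choose_eq_zero_of_lt (by omega), Nat.cast_zero, mul_zero, zero_mul]
    rw [htrunc, if_neg (by omega), if_neg (by omega), if_neg (by omega)]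
    obtain ⟨j, rfl⟩ : ∃ j, n = j + 7 := ⟨n - 7, by omega⟩
    simp only [Finset.sum_range_succ, Finset.sum_range_zero, coeff_pow7]
    rcases Nat.even_or_odd j with ⟨t, ht⟩ | ⟨t, ht⟩
    · -- n = 2t + 7, odd
      have e0 : j + 7 - 0 = 2 * (t + 3) + 1 := by omega
      have e1 : j + 7 - 1 = 2 * (t + 3) := by omega
      have e2 : j + 7 - 2 = 2 * (t + 2) + 1 := by omega
      have e3 : j + 7 - 3 = 2 * (t + 2) := by omega
      have e4 : j + 7 - 4 = 2 * (t + 1) + 1 := by omega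
      have e5 : j + 7 - 5 = 2 * (t + 1) := by omega
      have e6 : j + 7 - 6 = 2 * t + 1 := by omega
      have e7 : j + 7 - 7 = 2 * t := by omega
      rw [e0, e1, e2, e3, e4, e5, e6, e7, coS, ceS, coS, ceS, coS, ceS, coS, ceS]
      simp only [Gfun, c0, c1, c2, c3, c4, c5, c6, c7]
      push_cast
      ring
    · -- n = 2t + 8, even
      have e0 : j + 7 - 0 = 2 * (t + 4) := by omega
      have e1 : j + 7 - 1 = 2 * (t + 3) + 1 := by omega
      have e2 : j + 7 - 2 = 2 * (t + 3) := by omega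
      have e3 : j + 7 - 3 = 2 * (t + 2) + 1 := by omega
      have e4 : j + 7 - 4 = 2 * (t + 2) := by omega
      have e5 : j + 7 - 5 = 2 * (t + 1) + 1 := by omega
      have e6 : j + 7 - 6 = 2 * (t + 1) := by omega
      have e7 : j + 7 - 7 = 2 * t + 1 := by omega
      rw [e0, e1, e2, e3, e4, e5, e6, e7, ceS, coS, ceS, coS, ceS, coS, ceS, coS]
      simp only [Gfun, c0, c1, c2, c3, c4, c5, c6, c7]
      push_cast
      ring
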